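/- arXiv:1905.12477 — 4 statements merged into one kernel-verified Lean document; each statement's English description precedes it below -/
import Mathlib

section
/- If station s1 dominates station s2, then removing s2 from S and from every connection yields an instance whose minimum station-cover size equals that of the original instance. -/
/-!
Deleting `s2` from the connections turns a cover into a cover of the reduced instance once any
use of `s2` is traded for `s1`: every connection through `s2` also passes through `s1`, and the
trade does not increase the size. Conversely a cover of the reduced instance avoiding `s2` covers
the original one, since reduced connections are subsets of the original ones. So each instance
has a cover of size at most any cover of the other; in particular both are infeasible together,
where both minima take the junk value `sInf ∅ = 0`.
-/

theorem Nat.sInf_eq_sInf_of_forall_exists_le {A B : Set ℕ}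
    (hAB : ∀ a ∈ A, ∃ b ∈ B, b ≤ a) (hBA : ∀ b ∈ B, ∃ a ∈ A, a ≤ b) : sInf A = sInf B := by
  have sInf_le_of_nonempty : ∀ {A B : Set ℕ}, (∀ a ∈ A, ∃ b ∈ B, b ≤ a) → A.Nonempty →
      sInf B ≤ sInf A := fun h hA =>
    let ⟨_, hb, hle⟩ := h _ (Nat.sInf_mem hA)
    (Nat.sInf_le hb).trans hle
  rcases A.eq_empty_or_nonempty with rfl | hA
  · have hB : B = ∅ := Set.eq_empty_of_forall_notMem fun b hb => by
      obtain ⟨_, ha, _⟩ := hBA b hb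
      exact ha
    simp [hB]
  · obtain ⟨a, ha⟩ := hA
    obtain ⟨b, hb, -⟩ := hAB a ha
    exact le_antisymm (sInf_le_of_nonempty hBA ⟨b, hb⟩) (sInf_le_of_nonempty hAB ⟨a, ha⟩)

namespace Finset

variable {α : Type*} [DecidableEq α]

def IsStationCover (C : Finset (Finset α)) (S : Finset α) : Prop :=
  ∀ c ∈ C, (S ∩ c).Nonempty

theorem IsStationCover.of_image_erase {C : Finset (Finset α)} {S : Finset α} {s : α}
    (h : IsStationCover (C.image (·.erase s)) S) : IsStationCover C S := fun c hc =>
  (h _ (mem_image_of_mem _ hc)).mono (inter_subset_inter_left (erase_subset s c))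

theorem IsStationCover.image_erase_of_subset {C : Finset (Finset α)} {S T : Finset α}
    {s1 s2 : α} (hs : s1 ≠ s2) (hdom : ∀ c ∈ C, s2 ∈ c → s1 ∈ c) (h : IsStationCover C S)
    (hST : S.erase s2 ⊆ T) (hs1 : s2 ∈ S → s1 ∈ T) :
    IsStationCover (C.image (·.erase s2)) T := by
  rintro _ hc'
  obtain ⟨c, hc, rfl⟩ := mem_image.1 hc'
  obtain ⟨x, hx⟩ := h c hc
  obtain ⟨hxS, hxc⟩ := mem_inter.1 hx
  by_cases hxs2 : x = s2
  · subst hxs2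
    exact ⟨s1, mem_inter.2 ⟨hs1 hxS, mem_erase.2 ⟨hs, hdom c hc hxc⟩⟩⟩
  · exact ⟨x, mem_inter.2 ⟨hST (mem_erase.2 ⟨hxs2, hxS⟩), mem_erase.2 ⟨hxs2, hxc⟩⟩⟩

theorem IsStationCover.exists_image_erase {C : Finset (Finset α)} {S : Finset α}
    {s1 s2 : α} (hs : s1 ≠ s2) (hdom : ∀ c ∈ C, s2 ∈ c → s1 ∈ c) (h : IsStationCover C S) :
    ∃ T, s2 ∉ T ∧ IsStationCover (C.image (·.erase s2)) T ∧ T.card ≤ S.card := by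
  by_cases hs2 : s2 ∈ S
  · refine ⟨insert s1 (S.erase s2), ?_, ?_, ?_⟩
    · simp [hs.symm]
    · exact h.image_erase_of_subset hs hdom (subset_insert _ _) fun _ => mem_insert_self _ _
    · calc (insert s1 (S.erase s2)).card ≤ (S.erase s2).card + 1 := card_insert_le _ _
        _ = S.card := card_erase_add_one hs2
  · refine ⟨S, hs2, h.image_erase_of_subset hs hdom (erase_subset _ _) fun h => absurd h hs2,
      le_rfl⟩

end Finset

open Finset in
theorem stmt1_general {α : Type*} [DecidableEq α]
    (C : Finset (Finset α))
    (s1 s2 : α) (hs : s1 ≠ s2)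
    (hdom : ∀ c ∈ C, s2 ∈ c → s1 ∈ c) :
    sInf {k | ∃ S' : Finset α, (∀ c ∈ C, (S' ∩ c).Nonempty) ∧ S'.card = k} =
      sInf {k | ∃ S' : Finset α, s2 ∉ S' ∧
        (∀ c ∈ C.image (fun c => c.erase s2), (S' ∩ c).Nonempty) ∧ S'.card = k} := by
  apply Nat.sInf_eq_sInf_of_forall_exists_le
  · rintro _ ⟨S, hS, rfl⟩
    obtain ⟨T, hs2T, hT, hcard⟩ := IsStationCover.exists_image_erase hs hdom hS
    exact ⟨T.card, ⟨T, hs2T, hT, rfl⟩, hcard⟩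
  · rintro _ ⟨S, -, hS, rfl⟩
    exact ⟨S.card, ⟨S, IsStationCover.of_image_erase hS, rfl⟩, le_rfl⟩

/-- If `s1` dominates `s2`, removing `s2` from the station set and from every
connection yields an instance with the same minimum station-cover size. -/
theorem stmt1 {α : Type*} [Fintype α] [DecidableEq α]
    (C : Finset (Finset α)) (hne : ∀ c ∈ C, c.Nonempty)
    (s1 s2 : α) (hs : s1 ≠ s2)
    (hdom : ∀ c ∈ C, s2 ∈ c → s1 ∈ c) :
    sInf {k | ∃ S' : Finset α, (∀ c ∈ C, (S' ∩ c).Nonempty) ∧ S'.card = k} =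
      sInf {k | ∃ S' : Finset α, s2 ∉ S' ∧
        (∀ c ∈ C.image (fun c => c.erase s2), (S' ∩ c).Nonempty) ∧ S'.card = k} :=
  stmt1_general C s1 s2 hs hdom
end

section
/- For every connected graph G with at least one edge, there exists a station cover instance N1 with underlying graph G_{N1} = G such that after exhaustively applying the reduction rules, the core has exactly one station; namely, choose connections so that a single designated station s lies on every connection. -/
variable {α : Type*} [DecidableEq α]

/-- The underlying graph of a network of connections (sequences of stations). -/
def graphOf (C : Finset (List α)) : SimpleGraph α :=
  SimpleGraph.fromRel (fun a b => ∃ l ∈ C, [a, b] <:+: l)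

/-- One application of Weihe's reduction rules. -/
def Step (C C' : Finset (List α)) : Prop :=
  (∃ s1 s2 : α, s1 ≠ s2 ∧ (∃ l ∈ C, s2 ∈ l) ∧ (∀ l ∈ C, s2 ∈ l → s1 ∈ l) ∧
      C' = C.image (fun l => l.filter (fun x => x ≠ s2))) ∨
  (∃ l1 l2 : List α, l1 ∈ C ∧ l2 ∈ C ∧ l1 ≠ l2 ∧ (∀ x ∈ l1, x ∈ l2) ∧
      C' = C.erase l2)

/-! Fix an endpoint `s` of some edge. For an edge `ab`, take a path from `a` to `s`: if it passes
through `b`, its part from `b` on, preceded by `a`, is a path; otherwise the whole path preceded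
by `b` is. Either way we get a path through `s` that uses the edge, and these paths have
underlying graph `G`. Since `s` lies on every connection it dominates every other station, so the
other stations can be deleted one at a time, each deletion shrinking the station set, until only
the connection `[s]` is left; no rule applies to it. -/

namespace SimpleGraph.Walk

variable {V : Type*} {G : SimpleGraph V}

lemma prefix_support_cons {u v w : V} (h : G.Adj u v) (q : G.Walk v w) :
    [u, v] <+: (cons h q).support := by
  rw [support_cons, ← q.cons_tail_support]
  exact List.prefix_append [u, v] _

lemma IsPath.start_notMem_support_dropUntil [DecidableEq V] {u v w : V} {p : G.Walk u w}
    (hp : p.IsPath) (hv : v ∈ p.support) (huv : u ≠ v) : u ∉ (p.dropUntil v hv).support := by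
  intro hu
  have hsuffix := p.support_dropUntil_suffix_support hv
  rw [← p.cons_tail_support, List.suffix_cons_iff, ← (p.dropUntil v hv).cons_tail_support]
    at hsuffix
  rcases hsuffix with heq | hsuffix
  · exact huv (List.cons.inj heq).1.symm
  · have hnodup := hp.support_nodup
    rw [← p.cons_tail_support, List.nodup_cons] at hnodup
    rw [← (p.dropUntil v hv).cons_tail_support] at hu
    exact hnodup.1 (hsuffix.subset hu)

lemma IsPath.exists_isPath_cons_of_adj [DecidableEq V] {a b s : V} (hab : G.Adj a b)
    {p : G.Walk a s} (hp : p.IsPath) :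
    (∃ q : G.Walk b s, (cons hab q).IsPath) ∨ ∃ q : G.Walk a s, (cons hab.symm q).IsPath := by
  by_cases hb : b ∈ p.support
  · exact .inl ⟨p.dropUntil b hb, (cons_isPath_iff _ _).2
      ⟨hp.dropUntil hb, hp.start_notMem_support_dropUntil hb hab.ne⟩⟩
  · exact .inr ⟨p, (cons_isPath_iff _ _).2 ⟨hp, hb⟩⟩

end SimpleGraph.Walk

lemma SimpleGraph.Reachable.exists_nodup_isChain_infix_of_adj {V : Type*} {G : SimpleGraph V}
    {a b s : V} (hab : G.Adj a b) (has : G.Reachable a s) :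
    ∃ L : List V, L.Nodup ∧ L.IsChain G.Adj ∧ s ∈ L ∧ ([a, b] <:+: L ∨ [b, a] <:+: L) := by
  classical
  obtain ⟨p, hp⟩ := has.exists_isPath
  rcases hp.exists_isPath_cons_of_adj hab with ⟨q, hq⟩ | ⟨q, hq⟩
  · exact ⟨_, hq.support_nodup, Walk.isChain_adj_support _, Walk.end_mem_support _,
      .inl (Walk.prefix_support_cons _ _).isInfix⟩
  · exact ⟨_, hq.support_nodup, Walk.isChain_adj_support _, Walk.end_mem_support _,
      .inr (Walk.prefix_support_cons _ _).isInfix⟩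

lemma List.Nodup.eq_singleton_of_forall_eq {β : Type*} {l : List β} {s : β} (hnd : l.Nodup)
    (hs : s ∈ l) (h : ∀ x ∈ l, x = s) : l = [s] := by
  obtain ⟨n, rfl⟩ : ∃ n, l = List.replicate n s := ⟨_, List.eq_replicate_iff.2 ⟨rfl, h⟩⟩
  have hle : n ≤ 1 := List.nodup_replicate.1 hnd
  have hpos : n ≠ 0 := (List.mem_replicate.1 hs).1
  rw [show n = 1 by omega, List.replicate_one]

lemma graphOf_eq {V : Type*} {G : SimpleGraph V} {C : Finset (List V)}
    (hchain : ∀ l ∈ C, l.IsChain G.Adj)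
    (hcover : ∀ a b, G.Adj a b → ∃ l ∈ C, [a, b] <:+: l ∨ [b, a] <:+: l) : graphOf C = G := by
  ext a b
  rw [graphOf, SimpleGraph.fromRel_adj]
  constructor
  · rintro ⟨-, ⟨l, hl, h⟩ | ⟨l, hl, h⟩⟩
    · exact List.isChain_pair.1 ((hchain l hl).infix h)
    · exact (List.isChain_pair.1 ((hchain l hl).infix h)).symm
  · intro hab
    obtain ⟨l, hl, h | h⟩ := hcover a b hab
    exacts [⟨hab.ne, .inl ⟨l, hl, h⟩⟩, ⟨hab.ne, .inr ⟨l, hl, h⟩⟩]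

lemma step_image_filter_ne {C : Finset (List α)} {s t : α} (hts : t ≠ s) (ht : ∃ l ∈ C, t ∈ l)
    (hs : ∀ l ∈ C, s ∈ l) :
    Step C (C.image (List.filter (· ≠ t))) :=
  .inl ⟨s, t, hts.symm, ht, fun l hl _ => hs l hl, rfl⟩

lemma biUnion_image_filter_ne_subset (C : Finset (List α)) (t : α) :
    (C.image (List.filter (· ≠ t))).biUnion List.toFinset ⊆ (C.biUnion List.toFinset).erase t := by
  intro x
  simp only [Finset.mem_biUnion, Finset.mem_image, List.mem_toFinset, Finset.mem_erase]
  rintro ⟨_, ⟨l, hl, rfl⟩, hx⟩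
  rw [List.mem_filter, decide_eq_true_iff] at hx
  exact ⟨hx.2, l, hl, hx.1⟩

lemma not_step_singleton (s : α) (C' : Finset (List α)) : ¬ Step {[s]} C' := by
  rintro (⟨s₁, s₂, hne, ⟨l, hl, hs₂⟩, hdom, -⟩ | ⟨l₁, l₂, hl₁, hl₂, hne, -⟩)
  · rw [Finset.mem_singleton] at hl
    subst hl
    exact hne (List.mem_singleton.1 (hdom _ (Finset.mem_singleton_self _) hs₂) ▸
      (List.mem_singleton.1 hs₂).symm)
  · exact hne ((Finset.mem_singleton.1 hl₁).trans (Finset.mem_singleton.1 hl₂).symm)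

lemma eq_singleton_of_biUnion_subset {C : Finset (List α)} {s : α} (hne : C.Nonempty)
    (hnd : ∀ l ∈ C, l.Nodup) (hs : ∀ l ∈ C, s ∈ l) (honly : C.biUnion List.toFinset ⊆ {s}) :
    C = {[s]} := by
  refine Finset.eq_singleton_iff_nonempty_unique_mem.2 ⟨hne, fun l hl => ?_⟩
  refine (hnd l hl).eq_singleton_of_forall_eq (hs l hl) fun x hx => ?_
  exact Finset.mem_singleton.1 (honly (Finset.mem_biUnion.2 ⟨l, hl, List.mem_toFinset.2 hx⟩))

theorem exists_reduction_to_single_station {C : Finset (List α)} {s : α} (hne : C.Nonempty)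
    (hnd : ∀ l ∈ C, l.Nodup) (hs : ∀ l ∈ C, s ∈ l) :
    ∃ C', Relation.ReflTransGen Step C C' ∧ (¬ ∃ C'', Step C' C'') ∧
      (C'.biUnion List.toFinset).card = 1 := by
  by_cases honly : C.biUnion List.toFinset ⊆ {s}
  · obtain rfl := eq_singleton_of_biUnion_subset hne hnd hs honly
    exact ⟨_, .refl, fun ⟨C', h⟩ => not_step_singleton s C' h, by simp⟩
  · obtain ⟨t, ht, ht_notMem⟩ := Finset.not_subset.1 honly
    have hts : t ≠ s := Finset.notMem_singleton.1 ht_notMem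
    have hdecr : ((C.image (List.filter (· ≠ t))).biUnion List.toFinset).card <
        (C.biUnion List.toFinset).card :=
      (Finset.card_le_card (biUnion_image_filter_ne_subset C t)).trans_lt
        (Finset.card_erase_lt_of_mem ht)
    obtain ⟨l, hl, htl⟩ := Finset.mem_biUnion.1 ht
    have hnd' : ∀ l ∈ C.image (List.filter (· ≠ t)), l.Nodup :=
      Finset.forall_mem_image.2 fun l hl => (hnd l hl).filter _
    have hs' : ∀ l ∈ C.image (List.filter (· ≠ t)), s ∈ l :=
      Finset.forall_mem_image.2 fun l hl => List.mem_filter.2 ⟨hs l hl, by simpa using hts.symm⟩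
    obtain ⟨C', hred, hcore, hcard⟩ := exists_reduction_to_single_station (hne.image _) hnd' hs'
    exact ⟨C', .head (step_image_filter_ne hts ⟨l, hl, List.mem_toFinset.1 htl⟩ hs) hred,
      hcore, hcard⟩
termination_by (C.biUnion List.toFinset).card
decreasing_by simpa using hdecr

/-- For every connected graph `G` with an edge there is a station cover instance
(whose connections are simple paths in `G` all through one designated station `s`)
with underlying graph `G` whose core has exactly one station. -/
theorem stmt7 {α : Type*} [Fintype α] [DecidableEq α]
    (G : SimpleGraph α) (hconn : G.Connected) (hedge : ∃ a b : α, G.Adj a b) :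
    ∃ C : Finset (List α),
      (∀ l ∈ C, l.Nodup ∧ l.Chain' G.Adj) ∧
      graphOf C = G ∧
      (∃ s : α, ∀ l ∈ C, s ∈ l) ∧
      ∃ C' : Finset (List α), Relation.ReflTransGen Step C C' ∧
        (¬ ∃ C'' : Finset (List α), Step C' C'') ∧
        (C'.biUnion List.toFinset).card = 1 := by
  classical
  obtain ⟨s, b, hsb⟩ := hedge
  choose! L hnodup hchain hsL hinfix using fun a b (hab : G.Adj a b) =>
    (hconn a s).exists_nodup_isChain_infix_of_adj hab
  let C := (Finset.univ.filter fun e : α × α => G.Adj e.1 e.2).image fun e => L e.1 e.2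
  have hmem : ∀ {P : List α → Prop}, (∀ a b, G.Adj a b → P (L a b)) → ∀ l ∈ C, P l := by
    intro P hP
    simp only [C, Finset.forall_mem_image, Finset.mem_filter, Finset.mem_univ, true_and]
    exact fun e he => hP e.1 e.2 he
  have hs : ∀ l ∈ C, s ∈ l := hmem hsL
  have hgraph : graphOf C = G := graphOf_eq (hmem hchain) fun a b hab =>
    ⟨L a b, Finset.mem_image.2 ⟨(a, b), by simpa using hab, rfl⟩, hinfix a b hab⟩
  have hne : C.Nonempty := ⟨L s b, Finset.mem_image.2 ⟨(s, b), by simpa using hsb, rfl⟩⟩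
  exact ⟨C, hmem fun a b hab => ⟨hnodup a b hab, hchain a b hab⟩, hgraph, ⟨s, hs⟩,
    exists_reduction_to_single_station hne (hmem hnodup) hs⟩
end

section
/- In the 3-SAT reduction graph (literal vertices x, x̄ for each of n variables, each pair adjacent, plus vertices z0 and z1 adjacent to all literal vertices), the formula φ is satisfiable if and only if the resulting station cover instance has a cover of size n. -/
/-- Vertex set of the 3-SAT reduction graph: literal vertices `(i, b)` plus the two
special vertices `z0 = Sum.inr false` and `z1 = Sum.inr true`. -/
abbrev V (n : ℕ) := (Fin n × Bool) ⊕ Bool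

/-- A 3-clause: a triple of literals, each a variable with a polarity. -/
abbrev Clause (n : ℕ) := (Fin n × Bool) × (Fin n × Bool) × (Fin n × Bool)

/-- The connection `{x, x̄}` for variable `i`. -/
def varConn (n : ℕ) (i : Fin n) : Finset (V n) :=
  {Sum.inl (i, true), Sum.inl (i, false)}

/-- The connection `(l_a, z0, l_b, z1, l_c)` (as a set) for a clause. -/
def clauseConn (n : ℕ) (cl : Clause n) : Finset (V n) :=
  {Sum.inl cl.1, Sum.inr false, Sum.inl cl.2.1, Sum.inr true, Sum.inl cl.2.2}

/-- The connections of the station cover instance built from the formula `φ`. -/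
def conns (n : ℕ) (φ : List (Clause n)) : Finset (Finset (V n)) :=
  (Finset.univ.image (varConn n)) ∪ (φ.toFinset.image (clauseConn n))

/-- Satisfiability of a 3-CNF formula. -/
def Sat (n : ℕ) (φ : List (Clause n)) : Prop :=
  ∃ a : Fin n → Bool, ∀ cl ∈ φ,
    a cl.1.1 = cl.1.2 ∨ a cl.2.1.1 = cl.2.1.2 ∨ a cl.2.2.1 = cl.2.2.2

/-- The underlying graph of the reduction: the two literal vertices of each
variable are adjacent, and `z0`, `z1` are adjacent to all literal vertices. -/
def redGraph (n : ℕ) : SimpleGraph (V n) :=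
  SimpleGraph.fromRel (fun u v =>
    (∃ (i : Fin n) (b c : Bool), u = Sum.inl (i, b) ∧ v = Sum.inl (i, c)) ∨
    (∃ (p : Fin n × Bool) (z : Bool), u = Sum.inl p ∧ v = Sum.inr z))


/-! A cover of size `n` must take one literal of every variable and hence nothing else, so
it is exactly the set of literals made true by an assignment; such a set meets a clause
connection iff it contains one of the clause's literals, i.e. iff the assignment satisfies
the clause. -/

variable {n : ℕ}

theorem forall_mem_conns_iff {φ : List (Clause n)} {P : Finset (V n) → Prop} :
    (∀ c ∈ conns n φ, P c) ↔ (∀ i, P (varConn n i)) ∧ ∀ cl ∈ φ, P (clauseConn n cl) := by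
  simp only [conns, Finset.mem_union, Finset.mem_image, Finset.mem_univ, true_and,
    List.mem_toFinset]
  constructor
  · intro h
    exact ⟨fun i => h _ (.inl ⟨i, rfl⟩), fun cl hcl => h _ (.inr ⟨cl, hcl, rfl⟩)⟩
  · rintro ⟨hvar, hcl⟩ c (⟨i, rfl⟩ | ⟨cl, hmem, rfl⟩)
    exacts [hvar i, hcl cl hmem]

def Holds (a : Fin n → Bool) (cl : Clause n) : Prop :=
  a cl.1.1 = cl.1.2 ∨ a cl.2.1.1 = cl.2.1.2 ∨ a cl.2.2.1 = cl.2.2.2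

def trueLiterals (a : Fin n → Bool) : Finset (V n) :=
  Finset.univ.image fun i => Sum.inl (i, a i)

theorem card_trueLiterals (a : Fin n → Bool) : (trueLiterals a).card = n := by
  rw [trueLiterals, Finset.card_image_of_injective _ fun i j h => congrArg Prod.fst (Sum.inl_injective h),
    Finset.card_univ, Fintype.card_fin]

@[simp]
theorem inl_mem_trueLiterals {a : Fin n → Bool} {p : Fin n × Bool} :
    Sum.inl p ∈ trueLiterals a ↔ a p.1 = p.2 := by
  obtain ⟨i, b⟩ := p
  simp [trueLiterals, eq_comm]

@[simp]
theorem inr_notMem_trueLiterals (a : Fin n → Bool) (z : Bool) :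
    Sum.inr z ∉ trueLiterals a := by
  simp [trueLiterals]

theorem trueLiterals_inter_varConn_nonempty (a : Fin n → Bool) (i : Fin n) :
    (trueLiterals a ∩ varConn n i).Nonempty :=
  ⟨Sum.inl (i, a i), by cases h : a i <;> simp [varConn, h]⟩

theorem trueLiterals_inter_clauseConn_nonempty_iff {a : Fin n → Bool} {cl : Clause n} :
    (trueLiterals a ∩ clauseConn n cl).Nonempty ↔ Holds a cl := by
  simp only [Finset.Nonempty, Finset.mem_inter, clauseConn, Finset.mem_insert,
    Finset.mem_singleton]
  constructor
  · rintro ⟨v, hv, rfl | rfl | rfl | rfl | rfl⟩ <;> simp_all [Holds]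
  · rintro (h | h | h)
    exacts [⟨_, by simpa using h, .inl rfl⟩, ⟨_, by simpa using h, .inr (.inr (.inl rfl))⟩,
      ⟨_, by simpa using h, .inr (.inr (.inr (.inr rfl)))⟩]

theorem trueLiterals_covers_iff {a : Fin n → Bool} {φ : List (Clause n)} :
    (∀ c ∈ conns n φ, (trueLiterals a ∩ c).Nonempty) ↔ ∀ cl ∈ φ, Holds a cl := by
  simp [forall_mem_conns_iff, trueLiterals_inter_varConn_nonempty,
    trueLiterals_inter_clauseConn_nonempty_iff]

theorem exists_eq_trueLiterals {S : Finset (V n)} (hvar : ∀ i, (S ∩ varConn n i).Nonempty)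
    (hcard : S.card ≤ n) : ∃ a, S = trueLiterals a := by
  have hlit : ∀ i, ∃ b, Sum.inl (i, b) ∈ S := fun i => by
    obtain ⟨v, hv⟩ := hvar i
    simp only [Finset.mem_inter, varConn, Finset.mem_insert, Finset.mem_singleton] at hv
    obtain ⟨hvS, rfl | rfl⟩ := hv
    exacts [⟨true, hvS⟩, ⟨false, hvS⟩]
  choose a ha using hlit
  refine ⟨a, (Finset.eq_of_subset_of_card_le ?_ ?_).symm⟩
  · simpa [trueLiterals, Finset.image_subset_iff] using ha
  · rwa [card_trueLiterals]

/-- The formula `φ` is satisfiable iff the station cover instance of the 3-SAT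
reduction has a cover of size `n`. -/
theorem stmt10 (n : ℕ) (φ : List (Clause n)) :
    Sat n φ ↔ ∃ S' : Finset (V n), S'.card = n ∧
      ∀ c ∈ conns n φ, (S' ∩ c).Nonempty := by
  constructor
  · rintro ⟨a, ha⟩
    exact ⟨trueLiterals a, card_trueLiterals a, trueLiterals_covers_iff.2 ha⟩
  · rintro ⟨S, hcard, hcov⟩
    obtain ⟨a, rfl⟩ := exists_eq_trueLiterals (forall_mem_conns_iff.1 hcov).1 hcard.le
    exact ⟨a, trueLiterals_covers_iff.1 hcov⟩
end

section
/- The core of a station cover instance obtained by exhaustively applying the dominance reduction rules is unique up to the choice of representatives among mutually dominating stations and mutually equal connections; in particular, the number of stations in the core is independent of the order in which the reduction rules are applied. -/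
variable {α : Type*} [DecidableEq α]

/-- One application of a dominance reduction rule to an instance `(S, C)`:
either delete a dominated station from `S` and all connections, or delete a
dominated (superset) connection. -/
def Step14 (N N' : Finset α × Finset (Finset α)) : Prop :=
  (∃ s1 s2 : α, s1 ∈ N.1 ∧ s2 ∈ N.1 ∧ s1 ≠ s2 ∧
      (∀ c ∈ N.2, s2 ∈ c → s1 ∈ c) ∧
      N'.1 = N.1.erase s2 ∧ N'.2 = N.2.image (fun c => c.erase s2)) ∨
  (∃ c1 c2 : Finset α, c1 ∈ N.2 ∧ c2 ∈ N.2 ∧ c1 ≠ c2 ∧ c1 ⊆ c2 ∧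
      N'.1 = N.1 ∧ N'.2 = N.2.erase c2)

/-!
Both rules only delete, so rewriting terminates. Two rule applications to the same instance can
always be joined again, except when two mutually dominating stations are each deleted in favour of
the other; then the two results differ by the transposition of those stations. Newman's lemma,
run modulo the action of permutations of the stations (under which the rules are equivariant),
shows that all cores are images of each other under such permutations.
-/

open Relation
open scoped Pointwise

section NormalForms

variable {G X : Type*} [Group G] [MulAction G X] {r : X → X → Prop}

theorem Relation.ReflTransGen.smul (hr : ∀ (g : G) {a b : X}, r a b → r (g • a) (g • b))
    (g : G) {a b : X} (h : ReflTransGen r a b) : ReflTransGen r (g • a) (g • b) :=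
  h.lift (g • ·) fun _ _ => hr g

theorem not_exists_rel_smul (hr : ∀ (g : G) {a b : X}, r a b → r (g • a) (g • b))
    (g : G) {b : X} (hb : ¬∃ c, r b c) : ¬∃ c, r (g • b) c :=
  fun ⟨c, hc⟩ => hb ⟨g⁻¹ • c, by simpa using hr g⁻¹ hc⟩

theorem WellFounded.exists_reflTransGen_not_exists_rel (hwf : WellFounded (flip r)) (a : X) :
    ∃ b, ReflTransGen r a b ∧ ¬∃ c, r b c := by
  obtain ⟨b, hab, hmin⟩ := hwf.has_min {b | ReflTransGen r a b} ⟨a, .refl⟩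
  exact ⟨b, hab, fun ⟨c, hbc⟩ => hmin c (hab.tail hbc) hbc⟩

/-- Newman's lemma modulo a group action. -/
theorem exists_smul_eq_of_normalForms (hwf : WellFounded (flip r))
    (hr : ∀ (g : G) {a b : X}, r a b → r (g • a) (g • b))
    (hloc : ∀ {a b c : X}, r a b → r a c → Join (ReflTransGen r) b c ∨ ∃ g : G, g • b = c)
    {a b c : X} (hab : ReflTransGen r a b) (hb : ¬∃ d, r b d)
    (hac : ReflTransGen r a c) (hc : ¬∃ d, r c d) : ∃ g : G, g • b = c := by
  induction a using hwf.induction generalizing b c with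
  | _ a ih =>
    rcases hab.cases_head with rfl | ⟨b₁, hab₁, hb₁b⟩
    · rcases hac.cases_head with rfl | ⟨c₁, hac₁, -⟩
      · exact ⟨1, one_smul G _⟩
      · exact absurd ⟨c₁, hac₁⟩ hb
    rcases hac.cases_head with rfl | ⟨c₁, hac₁, hc₁c⟩
    · exact absurd ⟨b₁, hab₁⟩ hc
    rcases hloc hab₁ hac₁ with ⟨d, hb₁d, hc₁d⟩ | ⟨g, rfl⟩
    · obtain ⟨e, hde, he⟩ := hwf.exists_reflTransGen_not_exists_rel d
      obtain ⟨g, hg⟩ := ih b₁ hab₁ hb₁b hb (hb₁d.trans hde) he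
      obtain ⟨g', hg'⟩ := ih c₁ hac₁ hc₁c hc (hc₁d.trans hde) he
      exact ⟨g'⁻¹ * g, by rw [mul_smul, hg, ← hg', inv_smul_smul]⟩
    · obtain ⟨g', hg'⟩ :=
        ih (g • b₁) hac₁ (hb₁b.smul hr g) (not_exists_rel_smul hr g hb) hc₁c hc
      exact ⟨g' * g, by rw [mul_smul, hg']⟩

end NormalForms

theorem Finset.smul_finset_erase {G β : Type*} [Group G] [MulAction G β] [DecidableEq β]
    (g : G) (s : Finset β) (b : β) : g • s.erase b = (g • s).erase (g • b) :=
  image_erase (MulAction.injective g) s b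

theorem Equiv.swap_smul_finset_of_mem_iff {s t : α} {c : Finset α} (h : s ∈ c ↔ t ∈ c) :
    swap s t • c = c := by
  ext x
  rw [← Finset.inv_smul_mem_iff, swap_inv, Perm.smul_def, swap_apply_def]
  split_ifs with hs ht
  · rw [hs, h]
  · rw [ht, h]
  · rfl

namespace Step14

variable {S : Finset α} {C : Finset (Finset α)}

theorem card_add_card_lt {N M : Finset α × Finset (Finset α)} (h : Step14 N M) :
    M.1.card + M.2.card < N.1.card + N.2.card := by
  rcases h with ⟨-, t, -, ht, -, -, hM₁, hM₂⟩ | ⟨-, d, -, hd, -, -, hM₁, hM₂⟩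
  · rw [hM₁, hM₂]
    exact Nat.add_lt_add_of_lt_of_le (Finset.card_erase_lt_of_mem ht) Finset.card_image_le
  · rw [hM₁, hM₂]
    exact Nat.add_lt_add_left (Finset.card_erase_lt_of_mem hd) _

theorem wellFounded_flip : WellFounded (flip (Step14 (α := α))) :=
  (InvImage.wf (fun N : Finset α × Finset (Finset α) => N.1.card + N.2.card)
    wellFounded_lt).mono fun _ _ h => h.card_add_card_lt

theorem erase_station {s t : α} (hs : s ∈ S) (ht : t ∈ S) (hst : s ≠ t)
    (hdom : ∀ c ∈ C, t ∈ c → s ∈ c) : Step14 (S, C) (S.erase t, C.image (·.erase t)) :=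
  Or.inl ⟨s, t, hs, ht, hst, hdom, rfl, rfl⟩

theorem erase_connection {c d : Finset α} (hc : c ∈ C) (hd : d ∈ C) (hcd : c ≠ d)
    (hsub : c ⊆ d) : Step14 (S, C) (S, C.erase d) :=
  Or.inr ⟨c, d, hc, hd, hcd, hsub, rfl, rfl⟩

theorem smul (σ : Equiv.Perm α) {N M : Finset α × Finset (Finset α)} (h : Step14 N M) :
    Step14 (σ • N) (σ • M) := by
  obtain ⟨S, C⟩ := N
  obtain ⟨S', C'⟩ := M
  rcases h with ⟨s, t, hs, ht, hst, hdom, hM₁, hM₂⟩ | ⟨c, d, hc, hd, hcd, hsub, hM₁, hM₂⟩ <;>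
    dsimp only at hM₁ hM₂ <;> subst hM₁ hM₂
  · have hC : σ • C.image (·.erase t) = (σ • C).image (·.erase (σ • t)) := by
      rw [Finset.smul_finset_def, Finset.smul_finset_def, Finset.image_image, Finset.image_image]
      exact Finset.image_congr fun c _ => Finset.smul_finset_erase σ c t
    rw [Prod.smul_mk, Prod.smul_mk, hC, Finset.smul_finset_erase]
    refine erase_station (Finset.smul_mem_smul_finset hs) (Finset.smul_mem_smul_finset ht)
      ((smul_left_cancel_iff σ).not.2 hst) ?_
    rintro _ hσc htc
    obtain ⟨c, hc, rfl⟩ := Finset.mem_smul_finset.1 hσc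
    exact Finset.smul_mem_smul_finset (hdom c hc ((Finset.smul_mem_smul_finset_iff σ).1 htc))
  · rw [Prod.smul_mk, Prod.smul_mk, Finset.smul_finset_erase]
    exact erase_connection (Finset.smul_mem_smul_finset hc) (Finset.smul_mem_smul_finset hd)
      ((smul_left_cancel_iff σ).not.2 hcd) (Finset.smul_finset_subset_smul_finset_iff.2 hsub)

theorem erase_station_erase_station {s t s' t' : α} (hs : s ∈ S) (hst : s ≠ t)
    (hdom : ∀ c ∈ C, t ∈ c → s ∈ c) (hs' : s' ∈ S) (ht' : t' ∈ S) (hst' : s' ≠ t')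
    (hdom' : ∀ c ∈ C, t' ∈ c → s' ∈ c) (htt' : t ≠ t') (hcyc : ¬(s' = t ∧ s = t')) :
    Step14 (S.erase t, C.image (·.erase t))
      ((S.erase t).erase t', (C.image (·.erase t)).image (·.erase t')) := by
  have ht'S : t' ∈ S.erase t := Finset.mem_erase.2 ⟨htt'.symm, ht'⟩
  obtain rfl | hs't := eq_or_ne s' t
  · refine erase_station (Finset.mem_erase.2 ⟨hst, hs⟩) ht'S (fun h => hcyc ⟨rfl, h⟩) ?_
    rintro _ he ht'c
    obtain ⟨c, hc, rfl⟩ := Finset.mem_image.1 he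
    exact Finset.mem_erase.2 ⟨hst, hdom c hc (hdom' c hc (Finset.mem_of_mem_erase ht'c))⟩
  · refine erase_station (Finset.mem_erase.2 ⟨hs't, hs'⟩) ht'S hst' ?_
    rintro _ he ht'c
    obtain ⟨c, hc, rfl⟩ := Finset.mem_image.1 he
    exact Finset.mem_erase.2 ⟨hs't, hdom' c hc (Finset.mem_of_mem_erase ht'c)⟩

theorem erase_connection_erase_connection {c d c' d' : Finset α} (hc : c ∈ C) (hcd : c ≠ d)
    (hsub : c ⊆ d) (hc' : c' ∈ C) (hd' : d' ∈ C) (hcd' : c' ≠ d') (hsub' : c' ⊆ d')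
    (hdd' : d ≠ d') : Step14 (S, C.erase d) (S, (C.erase d).erase d') := by
  have hd'C : d' ∈ C.erase d := Finset.mem_erase.2 ⟨hdd'.symm, hd'⟩
  obtain rfl | hc'd := eq_or_ne c' d
  · refine erase_connection (Finset.mem_erase.2 ⟨hcd, hc⟩) hd'C ?_ (hsub.trans hsub')
    rintro rfl
    exact hcd (hsub.antisymm hsub')
  · exact erase_connection (Finset.mem_erase.2 ⟨hc'd, hc'⟩) hd'C hcd' hsub'

theorem reflTransGen_insert_superset {c d : Finset α} (hc : c ∈ C) (hsub : c ⊆ d) :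
    ReflTransGen Step14 (S, insert d C) (S, C) := by
  by_cases hd : d ∈ C
  · rw [Finset.insert_eq_of_mem hd]
  · have h := erase_connection (S := S) (Finset.mem_insert_of_mem hc) (Finset.mem_insert_self d C)
      (ne_of_mem_of_not_mem hc hd) hsub
    rw [Finset.erase_insert hd] at h
    exact .single h

theorem join_erase_station_erase_connection {s t : α} {c d : Finset α} (hs : s ∈ S) (ht : t ∈ S)
    (hst : s ≠ t) (hdom : ∀ e ∈ C, t ∈ e → s ∈ e) (hc : c ∈ C) (hd : d ∈ C) (hcd : c ≠ d)
    (hsub : c ⊆ d) :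
    Join (ReflTransGen Step14) (S.erase t, C.image (·.erase t)) (S, C.erase d) := by
  refine ⟨(S.erase t, (C.erase d).image (·.erase t)), ?_,
    .single (erase_station hs ht hst fun e he => hdom e (Finset.mem_of_mem_erase he))⟩
  have hC : C.image (·.erase t) = insert (d.erase t) ((C.erase d).image (·.erase t)) := by
    rw [← Finset.image_insert (fun e : Finset α => e.erase t), Finset.insert_erase hd]
  rw [hC]
  exact reflTransGen_insert_superset
    (Finset.mem_image_of_mem (·.erase t) (Finset.mem_erase.2 ⟨hcd, hc⟩))
    (Finset.erase_subset_erase t hsub)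

theorem swap_smul_erase_station {t t' : α} (ht : t ∈ S) (ht' : t' ∈ S)
    (hmut : ∀ c ∈ C, t ∈ c ↔ t' ∈ c) :
    Equiv.swap t t' • (S.erase t, C.image (·.erase t)) = (S.erase t', C.image (·.erase t')) := by
  have key (c : Finset α) (h : t ∈ c ↔ t' ∈ c) : Equiv.swap t t' • c.erase t = c.erase t' := by
    rw [Finset.smul_finset_erase, Equiv.swap_smul_finset_of_mem_iff h, Equiv.Perm.smul_def,
      Equiv.swap_apply_left]
  refine Prod.ext (key S (iff_of_true ht ht')) ?_
  change (C.image _).image _ = _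
  rw [Finset.image_image]
  exact Finset.image_congr fun c hc => key c (hmut c hc)

theorem erase_station_comm {t t' : α} :
    ((S.erase t').erase t, (C.image (·.erase t')).image (·.erase t)) =
      ((S.erase t).erase t', (C.image (·.erase t)).image (·.erase t')) := by
  rw [Finset.erase_right_comm, Finset.image_image, Finset.image_image]
  congr 2
  funext c
  exact Finset.erase_right_comm

theorem join_or_exists_smul_eq {N A B : Finset α × Finset (Finset α)} (hA : Step14 N A)
    (hB : Step14 N B) : Join (ReflTransGen Step14) A B ∨ ∃ σ : Equiv.Perm α, σ • A = B := by
  obtain ⟨S, C⟩ := N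
  obtain ⟨SA, CA⟩ := A
  obtain ⟨SB, CB⟩ := B
  rcases hA with ⟨s, t, hs, ht, hst, hdom, hA₁, hA₂⟩ | ⟨c, d, hc, hd, hcd, hsub, hA₁, hA₂⟩ <;>
    rcases hB with ⟨s', t', hs', ht', hst', hdom', hB₁, hB₂⟩ |
      ⟨c', d', hc', hd', hcd', hsub', hB₁, hB₂⟩ <;>
    dsimp only at hA₁ hA₂ hB₁ hB₂ <;> subst hA₁ hA₂ hB₁ hB₂
  · obtain rfl | htt' := eq_or_ne t t'
    · exact .inl ⟨_, .refl, .refl⟩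
    by_cases hcyc : s' = t ∧ s = t'
    · obtain ⟨rfl, rfl⟩ := hcyc
      exact .inr ⟨_, swap_smul_erase_station ht ht' fun c hc => ⟨hdom c hc, hdom' c hc⟩⟩
    refine .inl ⟨_, .single (erase_station_erase_station hs hst hdom hs' ht' hst' hdom' htt' hcyc),
      .single ?_⟩
    rw [← erase_station_comm]
    exact erase_station_erase_station hs' hst' hdom' hs ht hst hdom htt'.symm fun h => hcyc h.symm
  · exact .inl (join_erase_station_erase_connection hs ht hst hdom hc' hd' hcd' hsub')
  · obtain ⟨D, hAD, hBD⟩ := join_erase_station_erase_connection hs' ht' hst' hdom' hc hd hcd hsub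
    exact .inl ⟨D, hBD, hAD⟩
  · obtain rfl | hdd' := eq_or_ne d d'
    · exact .inl ⟨_, .refl, .refl⟩
    refine .inl ⟨_, .single (erase_connection_erase_connection hc hcd hsub hc' hd' hcd' hsub' hdd'),
      .single ?_⟩
    rw [Finset.erase_right_comm]
    exact erase_connection_erase_connection hc' hcd' hsub' hc hd hcd hsub hdd'.symm

end Step14

theorem stmt14_general (N N1 N2 : Finset α × Finset (Finset α))
    (h1 : Relation.ReflTransGen Step14 N N1) (h1irr : ¬ ∃ M, Step14 N1 M)
    (h2 : Relation.ReflTransGen Step14 N N2) (h2irr : ¬ ∃ M, Step14 N2 M) :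
    N1.1.card = N2.1.card := by
  obtain ⟨σ, rfl⟩ := exists_smul_eq_of_normalForms Step14.wellFounded_flip Step14.smul
    Step14.join_or_exists_smul_eq h1 h1irr h2 h2irr
  exact (Finset.card_smul_finset σ N1.1).symm

/-- Any two cores obtained from the same instance by maximal sequences of
reduction-rule applications have the same number of stations: the core size is
independent of the order of rule applications. -/
theorem stmt14 (N N1 N2 : Finset α × Finset (Finset α))
    (hne : ∀ c ∈ N.2, c.Nonempty) (hsub : ∀ c ∈ N.2, c ⊆ N.1)
    (h1 : Relation.ReflTransGen Step14 N N1) (h1irr : ¬ ∃ M, Step14 N1 M)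
    (h2 : Relation.ReflTransGen Step14 N N2) (h2irr : ¬ ∃ M, Step14 N2 M) :
    N1.1.card = N2.1.card :=
  stmt14_general N N1 N2 h1 h1irr h2 h2irr
end
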